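/- arXiv:1805.12095 — 3 statements merged into one kernel-verified Lean document; each statement's English description precedes it below -/
import Mathlib

section
/- Let V be a rational vector space and let T₀, T₁, …, T_N be endomorphisms of V. Suppose that for every k with 0 ≤ k ≤ N there exists a nonzero vector x ∈ V with T_m(x) = m^k · x for all m with 0 ≤ m ≤ N. Then T₀, …, T_N are linearly independent over ℚ. -/
/-- If for every `k ≤ N` there is a nonzero simultaneous eigenvector `x` with
`T m x = m^k • x` for all `m ≤ N`, then `T₀, …, T_N` are linearly independent. -/
theorem stmt_1 {V : Type*} [AddCommGroup V] [Module ℚ V] (N : ℕ)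
    (T : Fin (N + 1) → Module.End ℚ V)
    (h : ∀ k : Fin (N + 1), ∃ x : V, x ≠ 0 ∧
      ∀ m : Fin (N + 1), T m x = (((m : ℕ) : ℚ)) ^ (k : ℕ) • x) :
    LinearIndependent ℚ T := by
  rw [Fintype.linearIndependent_iff]
  intro c hc
  have key : ∀ k : Fin (N + 1), ∑ m, c m * ((m : ℕ) : ℚ) ^ (k : ℕ) = 0 := by
    intro k
    obtain ⟨x, hx, hxm⟩ := h k
    have h2 := congrArg (fun f : Module.End ℚ V => f x) hc
    simp only [LinearMap.coe_sum, Finset.sum_apply, LinearMap.smul_apply,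
      LinearMap.zero_apply, hxm, smul_smul] at h2
    rw [← Finset.sum_smul] at h2
    rcases smul_eq_zero.mp h2 with h3 | h3
    · exact h3
    · exact absurd h3 hx
  have hinj : Function.Injective (fun m : Fin (N + 1) => ((m : ℕ) : ℚ)) := by
    intro a b hab
    exact Fin.ext (Nat.cast_injective hab)
  have := Matrix.eq_zero_of_forall_pow_sum_mul_pow_eq_zero hinj key
  exact fun i => congrFun this i
end

section
/- Let R be a commutative ℚ-algebra and x ∈ R. Suppose x lies in a graded piece of weight q of a grading of R for which multiplication adds weights minus g, i.e. assume the products x^i vanish whenever i·q - (i-1)·g < 0. Define ψ^n(x) = n^{g-q} x for n ≥ 1, and set λ(x,t) = exp(Σ_{n≥1} ((-1)^{n-1}/n) ψ^n(x) t^n) and γ(x,t) = λ(x, t/(1-t)). Then the coefficient of x (i.e. the linear term) in γ^i(x) equals (-1)^{i-1} (i-1)! · S(g-q, i), where S denotes the Stirling number of the second kind. -/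
/-!
Write `d = g - q`. Since `γ(x,t) = exp(x · F_d(t))`, the linear coefficient of `γ^i(x)` is the
`t^i`-coefficient of `F_d(t) = ∑ ((-1)^{n-1}/n) n^d (t/(1-t))^n`. The `t^i`-coefficient of
`(t/(1-t))^n` is `C(i-1, n-1) = (n/i) C(i, n)`, so that coefficient is
`-(1/i) ∑_n (-1)^n C(i,n) n^d`. The alternating sum equals `(-1)^i i! S(d,i)`: by induction on `d`,
using `n C(i,n) = i C(i,n) - i C(i-1,n)`, both sides satisfy the recurrence of `S`.
-/

/-- Stirling numbers of the second kind. -/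
def stirling2 : ℕ → ℕ → ℕ
  | 0, 0 => 1
  | 0, _ + 1 => 0
  | _ + 1, 0 => 0
  | n + 1, k + 1 => (k + 1) * stirling2 n (k + 1) + stirling2 n k

/-- The power series `t/(1-t) = t + t² + t³ + ⋯` over `ℚ`. -/
noncomputable def tOneSubT : PowerSeries ℚ := PowerSeries.mk fun n => if n = 0 then 0 else 1

/-- `F_d(t) = ∑_{n ≥ 1} ((-1)^{n-1}/n) n^d (t/(1-t))^n`, so that
`γ(x,t) = λ(x, t/(1-t)) = exp(x · F_d(t))` for `ψ^n(x) = n^d x`. -/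
noncomputable def Fser (d : ℕ) : PowerSeries ℚ :=
  PowerSeries.mk fun i => ∑ n ∈ Finset.range (i + 1),
    (if n = 0 then (0 : ℚ) else (-1) ^ (n - 1) / (n : ℚ) * (n : ℚ) ^ d) *
      PowerSeries.coeff (R := ℚ) i (tOneSubT ^ n)

/-- The coefficient of `t^i` in `exp(x · F_d(t)) ∈ ℚ[x][[t]]`, as a polynomial in `x`. -/
noncomputable def gammaPoly (d i : ℕ) : Polynomial ℚ :=
  ∑ m ∈ Finset.range (i + 1),
    Polynomial.C ((Nat.factorial m : ℚ)⁻¹ * PowerSeries.coeff (R := ℚ) i (Fser d ^ m)) *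
      Polynomial.X ^ m

/-- The universal coefficient `a(i; d, m)` of `x^m` in `γ^i(x)`. -/
noncomputable def acoef (i d m : ℕ) : ℚ := (gammaPoly d i).coeff m

/-- The coefficient of `t^i` in `exp(x · F_d(t))` evaluated at an element `x` of a
commutative `ℚ`-algebra `R`; this is `γ^i(x)` for the operations `ψ^n(x) = n^d x`. -/
noncomputable def gammaCoeff {R : Type*} [CommRing R] [Algebra ℚ R] (d : ℕ) (x : R) (i : ℕ) : R :=
  ∑ m ∈ Finset.range (i + 1),
    ((Nat.factorial m : ℚ)⁻¹ * PowerSeries.coeff (R := ℚ) i (Fser d ^ m)) • x ^ m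


theorem Int.natCast_mul_succ_choose (k n : ℕ) :
    (n : ℤ) * (k + 1).choose n = (k + 1) * ((k + 1).choose n - k.choose n) := by
  rcases n with _ | m
  · simp
  · have h := Nat.add_one_mul_choose_eq k m
    rw [Nat.choose_succ_succ'] at h ⊢
    have h' : ((k + 1) * k.choose m : ℤ) = (k.choose m + k.choose (m + 1)) * (m + 1) := by
      exact_mod_cast h
    push_cast
    linear_combination -h'

theorem Int.alternating_sum_range_choose_mul_pow (d i : ℕ) :
    ∑ n ∈ Finset.range (i + 1), (-1 : ℤ) ^ n * i.choose n * (n : ℤ) ^ d =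
      (-1) ^ i * i.factorial * Nat.stirlingSecond d i := by
  induction d generalizing i with
  | zero =>
    rcases i with _ | k
    · simp
    · simpa using Int.alternating_sum_range_choose_of_ne k.succ_ne_zero
  | succ d ih =>
    rcases i with _ | k
    · simp
    have hk : ∑ n ∈ Finset.range (k + 2), (-1 : ℤ) ^ n * k.choose n * (n : ℤ) ^ d =
        ∑ n ∈ Finset.range (k + 1), (-1 : ℤ) ^ n * k.choose n * (n : ℤ) ^ d := by
      simp [Finset.sum_range_succ _ (k + 1)]
    have hrec : ∑ n ∈ Finset.range (k + 2), (-1 : ℤ) ^ n * (k + 1).choose n * (n : ℤ) ^ (d + 1) =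
        (k + 1) * ∑ n ∈ Finset.range (k + 2), (-1 : ℤ) ^ n * (k + 1).choose n * (n : ℤ) ^ d -
          (k + 1) * ∑ n ∈ Finset.range (k + 1), (-1 : ℤ) ^ n * k.choose n * (n : ℤ) ^ d := by
      rw [← hk, Finset.mul_sum, Finset.mul_sum, ← Finset.sum_sub_distrib]
      refine Finset.sum_congr rfl fun n _ => ?_
      linear_combination (-1 : ℤ) ^ n * (n : ℤ) ^ d * Int.natCast_mul_succ_choose k n
    rw [hrec, ih, ih, Nat.stirlingSecond_succ_succ, Nat.factorial_succ]
    push_cast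
    ring

theorem stirling2_eq_stirlingSecond : ∀ n k : ℕ, stirling2 n k = Nat.stirlingSecond n k
  | 0, 0 | 0, _ + 1 | _ + 1, 0 => rfl
  | n + 1, k + 1 => by
    rw [stirling2, Nat.stirlingSecond_succ_succ, stirling2_eq_stirlingSecond n (k + 1),
      stirling2_eq_stirlingSecond n k]

theorem tOneSubT_eq_X_mul_mk_one : tOneSubT = PowerSeries.X * PowerSeries.mk 1 := by
  ext n
  cases n <;> simp [tOneSubT]

theorem coeff_succ_tOneSubT_pow_succ (j m : ℕ) :
    PowerSeries.coeff (j + 1) (tOneSubT ^ (m + 1)) = (j.choose m : ℚ) := by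
  rw [tOneSubT_eq_X_mul_mk_one, mul_pow, PowerSeries.mk_one_pow_eq_mk_choose_add,
    PowerSeries.coeff_X_pow_mul']
  split_ifs with h
  · rw [PowerSeries.coeff_mk, show m + (j + 1 - (m + 1)) = j by omega]
  · rw [Nat.choose_eq_zero_of_lt (by omega), Nat.cast_zero]

theorem Fser_summand_eq {d : ℕ} (hd : d ≠ 0) (j n : ℕ) :
    (if n = 0 then (0 : ℚ) else (-1) ^ (n - 1) / (n : ℚ) * (n : ℚ) ^ d) *
        PowerSeries.coeff (j + 1) (tOneSubT ^ n) =
      -((-1) ^ n * (j + 1).choose n * (n : ℚ) ^ d) / (j + 1) := by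
  rcases n with _ | m
  · simp [hd]
  · have h : ((j + 1) * j.choose m : ℚ) = (j + 1).choose (m + 1) * (m + 1) := by
      exact_mod_cast Nat.add_one_mul_choose_eq j m
    rw [if_neg m.succ_ne_zero, coeff_succ_tOneSubT_pow_succ, Nat.add_sub_cancel]
    push_cast
    field_simp
    linear_combination (-1 : ℚ) ^ m * h

theorem coeff_succ_Fser {d : ℕ} (hd : d ≠ 0) (j : ℕ) :
    PowerSeries.coeff (j + 1) (Fser d) = (-1) ^ j * j.factorial * Nat.stirlingSecond d (j + 1) := by
  have h := congrArg (Int.cast : ℤ → ℚ) (Int.alternating_sum_range_choose_mul_pow d (j + 1))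
  push_cast at h
  rw [Fser, PowerSeries.coeff_mk, Finset.sum_congr rfl fun n _ => Fser_summand_eq hd j n,
    ← Finset.sum_div, Finset.sum_neg_distrib, h, Nat.factorial_succ]
  push_cast
  field_simp
  ring

theorem acoef_of_le {i m : ℕ} (d : ℕ) (hm : m ≤ i) :
    acoef i d m = (m.factorial : ℚ)⁻¹ * PowerSeries.coeff i (Fser d ^ m) := by
  simp only [acoef, gammaPoly, Polynomial.finsetSum_coeff, Polynomial.coeff_C_mul_X_pow,
    Finset.sum_ite_eq, Finset.mem_range, Nat.lt_succ_of_le hm, if_true]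

theorem stmt_3_general {R : Type*} [CommRing R] [Algebra ℚ R] (g q : ℕ) (hq : q < g) (x : R)
    (i : ℕ) (hi : 1 ≤ i) :
    gammaCoeff (g - q) x i = ∑ m ∈ Finset.range (i + 1), acoef i (g - q) m • x ^ m ∧
    acoef i (g - q) 1 =
      (-1 : ℚ) ^ (i - 1) * (Nat.factorial (i - 1) : ℚ) * (stirling2 (g - q) i : ℚ) := by
  refine ⟨Finset.sum_congr rfl fun m hm => ?_, ?_⟩
  · rw [acoef_of_le _ (Nat.le_of_lt_succ (Finset.mem_range.mp hm))]
  · obtain ⟨j, rfl⟩ := Nat.exists_eq_add_of_le' hi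
    rw [acoef_of_le _ hi, pow_one, coeff_succ_Fser (by omega), stirling2_eq_stirlingSecond,
      Nat.add_sub_cancel, Nat.factorial_one, Nat.cast_one, inv_one, one_mul]

/-- For `x` of weight `q < g` (so `ψ^n(x) = n^{g-q} x`) with `x^i = 0` whenever
`i·q - (i-1)·g < 0`, the element `γ^i(x)` is the universal polynomial
`∑_m a(i; g-q, m) x^m` in `x`, and the linear coefficient is
`a(i; g-q, 1) = (-1)^{i-1} (i-1)! S(g-q, i)` with `S` the Stirling number of the
second kind. -/
theorem stmt_3 {R : Type*} [CommRing R] [Algebra ℚ R] (g q : ℕ) (hq : q < g) (x : R)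
    (hx : ∀ i : ℕ, (i : ℤ) * (q : ℤ) - ((i : ℤ) - 1) * (g : ℤ) < 0 → x ^ i = 0)
    (i : ℕ) (hi : 1 ≤ i) :
    gammaCoeff (g - q) x i = ∑ m ∈ Finset.range (i + 1), acoef i (g - q) m • x ^ m ∧
    acoef i (g - q) 1 =
      (-1 : ℚ) ^ (i - 1) * (Nat.factorial (i - 1) : ℚ) * (stirling2 (g - q) i : ℚ) :=
  stmt_3_general g q hq x i hi
end

section
/- Let K be a ℚ-algebra bigraded by subspaces K^p_q (0 ≤ p,q ≤ g) with K^a_b · K^α_β ⊆ K^{a+α}_{b+β-g} (interpreted as 0 when a+α > g or b+β-g < 0). If K[i]·K[-j] = 0 for all i,j > 0 where K[j] = ⨁_{p+q-g=j} K^p_q, then K^r_g · K^s_n = 0 for all integers n ≥ 0, r ≥ n+1, s ≥ 0. -/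
/-- In the bigraded setting `K = ⨁ K^p_q` with `K^a_b · K^α_β ⊆ K^{a+α}_{b+β-g}`
(zero out of range), if `K[i]·K[-j] = 0` for all `i,j > 0` (where
`K[j] = ⨁_{p+q-g=j} K^p_q`), then `K^r_g · K^s_n = 0` for all `n ≥ 0`, `r ≥ n+1`,
`s ≥ 0`. -/
theorem stmt_15 {K : Type*} [CommRing K] [Algebra ℚ K] (g : ℕ)
    (P : ℕ → ℕ → Submodule ℚ K)
    (hbot : ∀ i j, (g < i ∨ g < j) → P i j = ⊥)
    (hmul : ∀ i j i' j', ∀ a ∈ P i j, ∀ b ∈ P i' j',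
      a * b ∈ P (i + i') (j + j' - g) ∧ (j + j' < g → a * b = 0))
    (KB : ℤ → Submodule ℚ K)
    (hKB : ∀ jj : ℤ, KB jj = ⨆ i : ℕ, ⨆ j : ℕ, ⨆ _ : (i : ℤ) + (j : ℤ) - (g : ℤ) = jj, P i j)
    (hconj : ∀ i j : ℤ, 0 < i → 0 < j → ∀ a ∈ KB i, ∀ b ∈ KB (-j), a * b = 0) :
    ∀ (n r s : ℕ), n + 1 ≤ r → ∀ a ∈ P r g, ∀ b ∈ P s n, a * b = 0 := by
  intro n r s hr a ha b hb
  by_cases hg : g < r + s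
  · -- product lands in P (r+s) n with r+s > g, hence zero
    have h := (hmul r g s n a ha b hb).1
    rw [hbot (r + s) _ (Or.inl hg)] at h
    simpa using h
  · push_neg at hg
    -- r + s ≤ g, so s + n < g
    have hsn : s + n < g := by omega
    have haK : a ∈ KB r := by
      rw [hKB]
      exact Submodule.mem_iSup_of_mem r (Submodule.mem_iSup_of_mem g
        (Submodule.mem_iSup_of_mem (by ring) ha))
    have hbK : b ∈ KB (-((g : ℤ) - s - n)) := by
      rw [hKB]
      exact Submodule.mem_iSup_of_mem s (Submodule.mem_iSup_of_mem n
        (Submodule.mem_iSup_of_mem (by ring) hb))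
    exact hconj r ((g : ℤ) - s - n) (by omega) (by omega) a haK b hbK
end
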